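/- arXiv:2405.08444 — 4 statements merged into one kernel-verified Lean document; each statement's English description precedes it below -/
import Mathlib

section
/- Let f be a piecewise λ-contraction on a compact metric space X with IFS {φ_i}_{i∈A} and fix x_0 ∈ X. For every regular point x ∈ Z(f) and every y ∈ ω(f,x), there exists a sequence of itineraries α^{(j)} of x of increasing orders n_j such that φ^{α^{(j)}}(x_0) → y; consequently ω(f,x) ⊆ Ω(f), where Ω(f) = ⋂_{m≥1} closure(⋃_{n≥m} {φ^α(x_0) : α ∈ I_n(f)}). -/
/-!
Fix one itinerary `β` of the regular point `x`. Since `f = φ i` on `A i`, the maps `φ^β` of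
order `n` send `x` to `fⁿ(x)`, and being `λⁿ`-Lipschitz they keep `φ^β(x₀)` within
`λⁿ d(x₀, x)` of `fⁿ(x)`. Every `y ∈ ω(f, x)` is the limit of some `f^{n_j}(x)` with `n_j`
strictly increasing, hence also of `φ^β(x₀)` taken at the orders `n_j`.
-/

open Filter Topology

/-- Composition `φ^α` of the first `n` maps of the IFS along the word `α`:
`compIFS φ α n = φ (α (n-1)) ∘ ⋯ ∘ φ (α 0)`. -/
def compIFS {X : Type*} {N : ℕ} (φ : Fin N → X → X) (α : ℕ → Fin N) : ℕ → X → X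
  | 0 => id
  | n + 1 => φ (α n) ∘ compIFS φ α n

/-- The ω-limit set of `x` under `f`. -/
def omegaSet {X : Type*} [TopologicalSpace X] (f : X → X) (x : X) : Set X :=
  ⋂ m : ℕ, closure (⋃ n ∈ Set.Ici m, ({f^[n] x} : Set X))

/-- `Ω(f) = ⋂_{m} closure (⋃_{n ≥ m} {φ^α(x₀) : α ∈ I_n(f)})`, where `I_n(f)` is
the set of itineraries of order `n` of `f`. -/
def OmegaIFS {X : Type*} [TopologicalSpace X] {N : ℕ}
    (f : X → X) (A : Fin N → Set X) (φ : Fin N → X → X) (x₀ : X) : Set X :=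
  ⋂ m : ℕ, closure (⋃ n ∈ Set.Ici m,
    ⋃ α ∈ {α : ℕ → Fin N | ∃ x, ∀ j < n, f^[j] x ∈ A (α j)},
      ({compIFS φ α n x₀} : Set X))

section

variable {X : Type*} {N : ℕ}

theorem mem_omegaSet_iff_mapClusterPt [TopologicalSpace X] {f : X → X} {x y : X} :
    y ∈ omegaSet f x ↔ MapClusterPt y atTop (fun n => f^[n] x) := by
  rw [mapClusterPt_atTop_iff_forall_mem_closure, omegaSet, Set.mem_iInter]
  simp only [Set.image_eq_iUnion]

theorem exists_strictMono_tendsto_of_mem_omegaSet [TopologicalSpace X]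
    [FirstCountableTopology X] {f : X → X} {x y : X} (hy : y ∈ omegaSet f x) :
    ∃ ψ : ℕ → ℕ, StrictMono ψ ∧ Tendsto (fun j => f^[ψ j] x) atTop (𝓝 y) :=
  (mem_omegaSet_iff_mapClusterPt.1 hy).tendsto_subseq

theorem mem_OmegaIFS_of_tendsto [TopologicalSpace X] {f : X → X} {A : Fin N → Set X}
    {φ : Fin N → X → X} {x₀ y : X} {n : ℕ → ℕ} {α : ℕ → ℕ → Fin N}
    (hn : Tendsto n atTop atTop) (hα : ∀ j, ∃ x, ∀ k < n j, f^[k] x ∈ A (α j k))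
    (hy : Tendsto (fun j => compIFS φ (α j) (n j) x₀) atTop (𝓝 y)) :
    y ∈ OmegaIFS f A φ x₀ := by
  refine Set.mem_iInter.2 fun m => mem_closure_of_tendsto hy ?_
  filter_upwards [hn.eventually_ge_atTop m] with j hj
  simp only [Set.mem_iUnion, Set.mem_singleton_iff, Set.mem_Ici]
  exact ⟨n j, hj, α j, hα j, rfl⟩

theorem compIFS_eq_iterate {f : X → X} {A : Fin N → Set X} {φ : Fin N → X → X}
    (heq : ∀ i, Set.EqOn f (φ i) (A i)) {x : X} {α : ℕ → Fin N} {n : ℕ}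
    (hα : ∀ k < n, f^[k] x ∈ A (α k)) :
    compIFS φ α n x = f^[n] x := by
  induction n with
  | zero => rfl
  | succ n ih =>
    change φ (α n) (compIFS φ α n x) = f^[n + 1] x
    rw [ih fun k hk => hα k (by omega), Function.iterate_succ_apply',
      ← heq (α n) (hα n n.lt_succ_self)]

variable [PseudoMetricSpace X]

theorem lipschitzWith_compIFS {φ : Fin N → X → X} {lam : NNReal}
    (hlip : ∀ i, LipschitzWith lam (φ i)) (α : ℕ → Fin N) (n : ℕ) :
    LipschitzWith (lam ^ n) (compIFS φ α n) := by
  induction n with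
  | zero => exact LipschitzWith.id
  | succ n ih => simpa only [pow_succ', compIFS] using (hlip (α n)).comp ih

theorem tendsto_compIFS_of_tendsto_iterate {f : X → X} {A : Fin N → Set X}
    {φ : Fin N → X → X} {lam : NNReal} (hlam : lam < 1)
    (hlip : ∀ i, LipschitzWith lam (φ i)) (heq : ∀ i, Set.EqOn f (φ i) (A i))
    {x : X} {α : ℕ → Fin N} (hα : ∀ k, f^[k] x ∈ A (α k)) (x₀ : X) {y : X}
    {n : ℕ → ℕ} (hn : Tendsto n atTop atTop) (hy : Tendsto (fun j => f^[n j] x) atTop (𝓝 y)) :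
    Tendsto (fun j => compIFS φ α (n j) x₀) atTop (𝓝 y) := by
  have hbound : ∀ j, dist (f^[n j] x) (compIFS φ α (n j) x₀) ≤ lam ^ n j * dist x x₀ := by
    intro j
    rw [← compIFS_eq_iterate heq fun k _ => hα k]
    exact (lipschitzWith_compIFS hlip α (n j)).dist_le_mul x x₀
  have hpow := (tendsto_pow_atTop_nhds_zero_of_lt_one lam.coe_nonneg hlam).comp hn
  refine hy.congr_dist (squeeze_zero (fun _ => dist_nonneg) hbound ?_)
  simpa using hpow.mul_const (dist x x₀)

end

theorem omega_subset_OmegaIFS_general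
    {X : Type*} [MetricSpace X]
    (f : X → X) (N : ℕ) (A : Fin N → Set X) (φ : Fin N → X → X)
    (lam : NNReal) (hlam : lam < 1)
    (hlip : ∀ i, LipschitzWith lam (φ i))
    (heq : ∀ i, Set.EqOn f (φ i) (A i))
    (x₀ : X) (x : X) (hx : ∀ n : ℕ, f^[n] x ∈ ⋃ i, A i) :
    (∀ y ∈ omegaSet f x, ∃ (nj : ℕ → ℕ) (α : ℕ → ℕ → Fin N),
        StrictMono nj ∧
        (∀ j, ∀ k < nj j, f^[k] x ∈ A (α j k)) ∧
        Filter.Tendsto (fun j => compIFS φ (α j) (nj j) x₀) Filter.atTop (nhds y)) ∧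
    omegaSet f x ⊆ OmegaIFS f A φ x₀ := by
  choose β hβ using fun n => Set.mem_iUnion.1 (hx n)
  have approx : ∀ y ∈ omegaSet f x, ∃ (nj : ℕ → ℕ) (α : ℕ → ℕ → Fin N),
      StrictMono nj ∧
      (∀ j, ∀ k < nj j, f^[k] x ∈ A (α j k)) ∧
      Tendsto (fun j => compIFS φ (α j) (nj j) x₀) atTop (𝓝 y) := by
    intro y hy
    obtain ⟨ψ, hψ, hlim⟩ := exists_strictMono_tendsto_of_mem_omegaSet hy
    exact ⟨ψ, fun _ => β, hψ, fun _ k _ => hβ k,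
      tendsto_compIFS_of_tendsto_iterate hlam hlip heq hβ x₀ hψ.tendsto_atTop hlim⟩
  refine ⟨approx, fun y hy => ?_⟩
  obtain ⟨nj, α, hnj, hα, hlim⟩ := approx y hy
  exact mem_OmegaIFS_of_tendsto hnj.tendsto_atTop (fun j => ⟨x, hα j⟩) hlim

/-- any point of `ω(f,x)` for a regular point `x` is a limit of points
`φ^{α⁽ʲ⁾}(x₀)` along itineraries of `x` of increasing orders; consequently
`ω(f,x) ⊆ Ω(f)`. -/
theorem omega_subset_OmegaIFS
    {X : Type*} [MetricSpace X] [CompactSpace X]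
    (f : X → X) (N : ℕ) (A : Fin N → Set X) (φ : Fin N → X → X)
    (lam : NNReal) (hlam0 : 0 < lam) (hlam : lam < 1)
    (hopen : ∀ i, IsOpen (A i))
    (hconn : ∀ i, IsConnected (A i))
    (hdisj : ∀ i j, i ≠ j → Disjoint (A i) (A j))
    (hdense : Dense (⋃ i, A i))
    (hlip : ∀ i, LipschitzWith lam (φ i))
    (hbilip : ∀ i, ∃ K : NNReal, AntilipschitzWith K (φ i))
    (heq : ∀ i, Set.EqOn f (φ i) (A i))
    (x₀ : X) (x : X) (hx : ∀ n : ℕ, f^[n] x ∈ ⋃ i, A i) :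
    (∀ y ∈ omegaSet f x, ∃ (nj : ℕ → ℕ) (α : ℕ → ℕ → Fin N),
        StrictMono nj ∧
        (∀ j, ∀ k < nj j, f^[k] x ∈ A (α j k)) ∧
        Filter.Tendsto (fun j => compIFS φ (α j) (nj j) x₀) Filter.atTop (nhds y)) ∧
    omegaSet f x ⊆ OmegaIFS f A φ x₀ :=
  omega_subset_OmegaIFS_general f N A φ lam hlam hlip heq x₀ x hx
end

section
/- Let f be a piecewise λ-contraction on a compact metric space X with IFS {φ_i} and fix x_0 ∈ X. For every n ≥ 1, the set Ω(f) is covered by the finitely many closed balls of radius 2·diam(X)·λ^n centered at the points φ^α(x_0) with α ranging over the itineraries of order n of f. -/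
lemma compIFS_lipschitz {X : Type*} [MetricSpace X] {N : ℕ} {φ : Fin N → X → X}
    {lam : NNReal} (hlip : ∀ i, LipschitzWith lam (φ i)) (α : ℕ → Fin N) (n : ℕ) :
    LipschitzWith (lam ^ n) (compIFS φ α n) := by
  induction n with
  | zero => simpa [compIFS] using LipschitzWith.id
  | succ k ih =>
    have := (hlip (α k)).comp ih
    simpa [compIFS, pow_succ, mul_comm] using this

lemma compIFS_add {X : Type*} {N : ℕ} (φ : Fin N → X → X) (α : ℕ → Fin N)
    (k n : ℕ) (x : X) :
    compIFS φ α (k + n) x = compIFS φ (fun j => α (j + k)) n (compIFS φ α k x) := by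
  induction n with
  | zero => simp [compIFS]
  | succ m ih =>
    have : k + (m + 1) = (k + m) + 1 := by omega
    rw [this]
    simp only [compIFS, Function.comp_apply, ih]
    rw [Nat.add_comm k m]

lemma compIFS_congr {X : Type*} {N : ℕ} (φ : Fin N → X → X) {α β : ℕ → Fin N}
    {n : ℕ} (h : ∀ j < n, α j = β j) (x : X) :
    compIFS φ α n x = compIFS φ β n x := by
  induction n with
  | zero => rfl
  | succ m ih =>
    simp only [compIFS, Function.comp_apply]
    rw [h m (by omega), ih (fun j hj => h j (by omega))]

/-- for every `n ≥ 1`, `Ω(f)` is covered by the closed balls of radius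
`2 diam(X) λⁿ` centred at the points `φ^α(x₀)` with `α` an itinerary of order `n`. -/
theorem OmegaIFS_covered_by_balls
    {X : Type*} [MetricSpace X] [CompactSpace X]
    (f : X → X) (N : ℕ) (A : Fin N → Set X) (φ : Fin N → X → X)
    (lam : NNReal) (hlam0 : 0 < lam) (hlam : lam < 1)
    (hopen : ∀ i, IsOpen (A i))
    (hconn : ∀ i, IsConnected (A i))
    (hdisj : ∀ i j, i ≠ j → Disjoint (A i) (A j))
    (hdense : Dense (⋃ i, A i))
    (hlip : ∀ i, LipschitzWith lam (φ i))
    (hbilip : ∀ i, ∃ K : NNReal, AntilipschitzWith K (φ i))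
    (heq : ∀ i, Set.EqOn f (φ i) (A i))
    (x₀ : X) (n : ℕ) (hn : 1 ≤ n) :
    OmegaIFS f A φ x₀ ⊆
      ⋃ α ∈ {α : ℕ → Fin N | ∃ x, ∀ j < n, f^[j] x ∈ A (α j)},
        Metric.closedBall (compIFS φ α n x₀)
          (2 * Metric.diam (Set.univ : Set X) * (lam : ℝ) ^ n) := by
  intro p hp
  set r : ℝ := 2 * Metric.diam (Set.univ : Set X) * (lam : ℝ) ^ n with hr
  set S : Set (ℕ → Fin N) := {α : ℕ → Fin N | ∃ x, ∀ j < n, f^[j] x ∈ A (α j)} with hS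
  set c : (ℕ → Fin N) → X := fun α => compIFS φ α n x₀ with hc
  -- the image of the centers is finite
  have hfin : (c '' S).Finite := by
    have hsubr : c '' S ⊆ Set.range (fun v : Fin n → Fin N =>
        compIFS φ (fun j => if h : j < n then v ⟨j, h⟩ else v ⟨0, hn⟩) n x₀) := by
      rintro y ⟨α, _, rfl⟩
      refine ⟨fun i => α i, ?_⟩
      exact compIFS_congr φ (fun j hj => by simp [hj]) x₀
    exact (Set.finite_range _).subset hsubr
  have hclosed : IsClosed (⋃ y ∈ c '' S, Metric.closedBall y r) :=
    hfin.isClosed_biUnion (fun _ _ => Metric.isClosed_closedBall)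
  suffices hsuff : p ∈ ⋃ y ∈ c '' S, Metric.closedBall y r by
    rw [Set.biUnion_image] at hsuff
    exact hsuff
  have hp' : p ∈ closure (⋃ m ∈ Set.Ici n,
      ⋃ α ∈ {α : ℕ → Fin N | ∃ x, ∀ j < m, f^[j] x ∈ A (α j)},
        ({compIFS φ α m x₀} : Set X)) := Set.mem_iInter.mp hp n
  refine closure_minimal ?_ hclosed hp'
  rintro q hq
  simp only [Set.mem_iUnion, Set.mem_singleton_iff, Set.mem_Ici, Set.mem_setOf_eq] at hq
  obtain ⟨m, hm, α, ⟨x, hx⟩, rfl⟩ := hq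
  set β : ℕ → Fin N := fun j => α (j + (m - n)) with hβ
  have hβS : β ∈ S := by
    refine ⟨f^[m - n] x, fun j hj => ?_⟩
    have : f^[j] (f^[m - n] x) = f^[j + (m - n)] x :=
      (Function.iterate_add_apply f j (m - n) x).symm
    rw [this]
    exact hx (j + (m - n)) (by omega)
  refine Set.mem_biUnion (Set.mem_image_of_mem c hβS) ?_
  rw [Metric.mem_closedBall]
  have hmn : (m - n) + n = m := by omega
  have hrw : compIFS φ α m x₀ = compIFS φ β n (compIFS φ α (m - n) x₀) := by
    conv_lhs => rw [← hmn]
    exact compIFS_add φ α (m - n) n x₀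
  rw [hrw]
  have hdist : dist (compIFS φ β n (compIFS φ α (m - n) x₀)) (compIFS φ β n x₀)
      ≤ (lam : ℝ) ^ n * dist (compIFS φ α (m - n) x₀) x₀ := by
    have := (compIFS_lipschitz hlip β n).dist_le_mul (compIFS φ α (m - n) x₀) x₀
    simpa [NNReal.coe_pow] using this
  have hdiam : dist (compIFS φ α (m - n) x₀) x₀ ≤ Metric.diam (Set.univ : Set X) :=
    Metric.dist_le_diam_of_mem (isCompact_univ.isBounded) (Set.mem_univ _) (Set.mem_univ _)
  have hd0 : (0 : ℝ) ≤ Metric.diam (Set.univ : Set X) := Metric.diam_nonneg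
  have hl0 : (0 : ℝ) ≤ (lam : ℝ) ^ n := by positivity
  calc dist (compIFS φ β n (compIFS φ α (m - n) x₀)) (compIFS φ β n x₀)
      ≤ (lam : ℝ) ^ n * Metric.diam (Set.univ : Set X) := by
        refine hdist.trans ?_
        exact mul_le_mul_of_nonneg_left hdiam hl0
    _ ≤ r := by rw [hr]; nlinarith
end

section
/- Let f be a piecewise λ-contraction on a compact metric space X with connected open balls. If C = {C_j}_{j∈Λ} is a strongly invariant collection of finitely many pairwise disjoint open subsets of X, then there exist finitely many periodic orbits γ_1,…,γ_r of f contained in ⋃_j C_j such that ω(f,y) ∈ {γ_1,…,γ_r} for every y ∈ ⋃_j C_j. -/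
/-- `γ` is a periodic orbit of `f`. -/
def IsPeriodicOrbit {X : Type*} (f : X → X) (γ : Set X) : Prop :=
  ∃ (x : X) (p : ℕ), 0 < p ∧ f^[p] x = x ∧ γ = {y | ∃ n : ℕ, f^[n] x = y}

open Set Filter Topology Function NNReal

theorem Finite.exists_isPeriodicPt_iterate {α : Type*} [Finite α] (σ : α → α) (a : α) :
    ∃ m p : ℕ, 0 < p ∧ IsPeriodicPt σ p (σ^[m] a) := by
  obtain ⟨i, j, hij, he⟩ := Finite.exists_ne_map_eq_of_infinite fun k : ℕ => σ^[k] a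
  wlog hlt : i < j generalizing i j
  · exact this j i hij.symm he.symm (hij.lt_or_gt.resolve_left hlt)
  refine ⟨i, j - i, Nat.sub_pos_of_lt hlt, ?_⟩
  change σ^[j - i] (σ^[i] a) = σ^[i] a
  rw [← iterate_add_apply, Nat.sub_add_cancel hlt.le]
  exact he.symm

section IndexedFamily

variable {X ι : Type*} {f : X → X} {s : ι → Set X} {σ : ι → ι}

theorem Set.mapsTo_iterate_of_forall_mapsTo (hf : ∀ i, MapsTo f (s i) (s (σ i))) (m : ℕ)
    (i : ι) : MapsTo f^[m] (s i) (s (σ^[m] i)) := by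
  induction m generalizing i with
  | zero => exact mapsTo_id _
  | succ m ih => rw [iterate_succ, iterate_succ]; exact (ih (σ i)).comp (hf i)

theorem LipschitzOnWith.iterate_of_forall_mapsTo [PseudoEMetricSpace X] {K : ℝ≥0}
    (hK : ∀ i, LipschitzOnWith K f (s i)) (hf : ∀ i, MapsTo f (s i) (s (σ i))) (m : ℕ)
    (i : ι) : LipschitzOnWith (K ^ m) f^[m] (s i) := by
  induction m generalizing i with
  | zero => simpa using LipschitzWith.id.lipschitzOnWith
  | succ m ih => rw [iterate_succ, pow_succ]; exact (ih (σ i)).comp (hK i) (hf i)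

end IndexedFamily

theorem LipschitzOnWith.exists_isFixedPt_of_closure_image_subset {X : Type*} [MetricSpace X]
    [CompleteSpace X] {g : X → X} {D : Set X} {K : ℝ≥0} (hg : LipschitzOnWith K g D)
    (hK : K < 1) (hD : D.Nonempty) (hcl : closure (g '' D) ⊆ D) : ∃ x ∈ D, IsFixedPt g x := by
  have hE : MapsTo g (closure (g '' D)) (closure (g '' D)) := fun x hx =>
    subset_closure (mem_image_of_mem g (hcl hx))
  obtain ⟨x, hx⟩ := hD
  obtain ⟨y, hyE, hy, -⟩ := ContractingWith.exists_fixedPoint' isClosed_closure.isComplete hE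
    ⟨hK, (hg.mono hcl).mapsToRestrict hE⟩ (subset_closure (mem_image_of_mem g hx))
    (edist_ne_top _ _)
  exact ⟨y, hcl hyE, hy⟩

theorem mem_omegaSet_iff {X : Type*} [PseudoMetricSpace X] {f : X → X} {x z : X} :
    z ∈ omegaSet f x ↔ ∀ M : ℕ, ∀ ε > 0, ∃ m ≥ M, dist z (f^[m] x) < ε := by
  simp only [omegaSet, mem_iInter, Metric.mem_closure_iff, mem_iUnion, mem_singleton_iff,
    mem_Ici, exists_prop]
  refine forall_congr' fun M => forall₂_congr fun ε _ => ⟨?_, ?_⟩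
  · rintro ⟨_, ⟨m, hm, rfl⟩, h⟩
    exact ⟨m, hm, h⟩
  · rintro ⟨m, hm, h⟩
    exact ⟨_, ⟨m, hm, rfl⟩, h⟩

theorem omegaSet_eq_range_of_tendsto_dist {X : Type*} [MetricSpace X] {f : X → X} {x y : X}
    {n m₀ : ℕ} (hn : 0 < n) (hx : IsPeriodicPt f n x)
    (h : Tendsto (fun m => dist (f^[m + m₀] y) (f^[m] x)) atTop (𝓝 0)) :
    omegaSet f y = range fun k => f^[k] x := by
  have hclosed : IsClosed (range fun k => f^[k] x) := by
    refine (((finite_Iio n).image fun k => f^[k] x).subset ?_).isClosed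
    rintro _ ⟨k, rfl⟩
    exact ⟨k % n, Nat.mod_lt k hn, hx.iterate_mod_apply k⟩
  have hsmall : ∀ ε > 0, ∃ M, ∀ m ≥ M, dist (f^[m + m₀] y) (f^[m] x) < ε := fun ε hε =>
    (Metric.tendsto_atTop.1 h ε hε).imp fun M hM m hm => by simpa using hM m hm
  ext z
  rw [mem_omegaSet_iff]
  constructor
  · intro hz
    rw [← hclosed.closure_eq, Metric.mem_closure_iff]
    intro ε hε
    obtain ⟨M, hM⟩ := hsmall (ε / 2) (half_pos hε)
    obtain ⟨m, hm, hzm⟩ := hz (M + m₀) (ε / 2) (half_pos hε)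
    have hym := hM (m - m₀) (by omega)
    rw [Nat.sub_add_cancel (by omega)] at hym
    refine ⟨f^[m - m₀] x, mem_range_self _, ?_⟩
    calc dist z (f^[m - m₀] x) ≤ dist z (f^[m] y) + dist (f^[m] y) (f^[m - m₀] x) :=
          dist_triangle _ _ _
      _ < ε / 2 + ε / 2 := add_lt_add hzm hym
      _ = ε := add_halves ε
  · rintro ⟨j, rfl⟩ M ε hε
    dsimp only
    obtain ⟨M', hM'⟩ := hsmall ε hε
    have hMn : M + M' ≤ n * (M + M') := Nat.le_mul_of_pos_left _ hn
    have hj : f^[j + n * (M + M')] x = f^[j] x := by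
      rw [← hx.iterate_mod_apply, Nat.add_mul_mod_self_left, hx.iterate_mod_apply]
    refine ⟨j + n * (M + M') + m₀, by omega, ?_⟩
    rw [dist_comm, ← hj]
    exact hM' _ (by omega)

theorem exists_isPeriodicPt_forall_omegaSet_eq {X ι : Type*} [MetricSpace X] [CompleteSpace X]
    [Finite ι] {f : X → X} {s : ι → Set X} {σ : ι → ι} {K : ℝ≥0} {n₀ : ℕ}
    (hmaps : ∀ i, MapsTo f (s i) (s (σ i))) (hlip : ∀ i, LipschitzOnWith K f (s i))
    (hK : K < 1) (hdisj : Pairwise (Disjoint on s))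
    (hcl : ∀ i, ∀ n ≥ n₀, ∃ j, closure (f^[n] '' s i) ⊆ s j) {a : ι} (ha : (s a).Nonempty) :
    ∃ x n, 0 < n ∧ IsPeriodicPt f n x ∧ (range fun k => f^[k] x) ⊆ ⋃ i, s i ∧
      ∀ y ∈ s a, omegaSet f y = range fun k => f^[k] x := by
  obtain ⟨m₀, p, hp, hper⟩ := Finite.exists_isPeriodicPt_iterate σ a
  set d := σ^[m₀] a
  set n := (n₀ + 1) * p
  have hn : 0 < n := Nat.mul_pos n₀.succ_pos hp
  have hDmaps : MapsTo f^[n] (s d) (s d) := by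
    have := mapsTo_iterate_of_forall_mapsTo hmaps n d
    rwa [(hper.const_mul (n₀ + 1)).eq] at this
  obtain ⟨y₀, hy₀⟩ := ha
  have hDne : (s d).Nonempty := ⟨_, mapsTo_iterate_of_forall_mapsTo hmaps m₀ a hy₀⟩
  have hDcl : closure (f^[n] '' s d) ⊆ s d := by
    obtain ⟨j, hj⟩ := hcl d n (Nat.le_mul_of_pos_right _ hp |>.trans' (Nat.le_succ n₀))
    obtain ⟨z, hz⟩ := hDne
    have hzj : f^[n] z ∈ s j := hj (subset_closure (mem_image_of_mem _ hz))
    obtain rfl : j = d := by_contra fun hjd => (hdisj hjd).ne_of_mem hzj (hDmaps hz) rfl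
    exact hj
  have hlipD := LipschitzOnWith.iterate_of_forall_mapsTo hlip hmaps
  obtain ⟨x, hxD, hx⟩ := (hlipD n d).exists_isFixedPt_of_closure_image_subset
    (pow_lt_one₀ zero_le hK hn.ne') hDne hDcl
  refine ⟨x, n, hn, hx, range_subset_iff.2 fun k =>
    mem_iUnion.2 ⟨_, mapsTo_iterate_of_forall_mapsTo hmaps k d hxD⟩, fun y hy => ?_⟩
  have hyD : f^[m₀] y ∈ s d := mapsTo_iterate_of_forall_mapsTo hmaps m₀ a hy
  have hdecay : Tendsto (fun m => (K : ℝ) ^ m * dist (f^[m₀] y) x) atTop (𝓝 0) := by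
    simpa using (tendsto_pow_atTop_nhds_zero_of_lt_one K.coe_nonneg hK).mul_const _
  refine omegaSet_eq_range_of_tendsto_dist (m₀ := m₀) hn hx
    (squeeze_zero (fun _ => dist_nonneg) (fun m => ?_) hdecay)
  rw [iterate_add_apply]
  exact_mod_cast (hlipD m d).dist_le_mul _ hyD _ hxD

theorem Finset.exists_isPeriodicPt_forall_omegaSet_eq {X : Type*} [MetricSpace X]
    [CompleteSpace X] {f : X → X} {𝒞 : Finset (Set X)} {K : ℝ≥0} {n₀ : ℕ}
    (hmaps : ∀ C ∈ 𝒞, ∃ C' ∈ 𝒞, f '' C ⊆ C') (hlip : ∀ C ∈ 𝒞, LipschitzOnWith K f C)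
    (hK : K < 1) (hdisj : (𝒞 : Set (Set X)).Pairwise Disjoint)
    (hcl : ∀ B ∈ 𝒞, ∀ n, n₀ ≤ n → ∃ B' ∈ 𝒞, closure (f^[n] '' B) ⊆ B') {C : Set X}
    (hC : C ∈ 𝒞) (hCne : C.Nonempty) :
    ∃ x n, 0 < n ∧ IsPeriodicPt f n x ∧ (Set.range fun k => f^[k] x) ⊆ ⋃ C ∈ 𝒞, C ∧
      ∀ y ∈ C, omegaSet f y = Set.range fun k => f^[k] x := by
  have hmaps' (C : 𝒞) : ∃ C' : 𝒞, MapsTo f C C' := by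
    obtain ⟨C', hC', h⟩ := hmaps C C.2
    exact ⟨⟨C', hC'⟩, Set.image_subset_iff.1 h⟩
  choose σ hσ using hmaps'
  have hcl' (B : 𝒞) (n : ℕ) (hn : n ≥ n₀) : ∃ B' : 𝒞, closure (f^[n] '' B) ⊆ B' := by
    obtain ⟨B', hB', h⟩ := hcl B B.2 n hn
    exact ⟨⟨B', hB'⟩, h⟩
  rw [← iUnion_subtype (· ∈ 𝒞) Subtype.val]
  exact _root_.exists_isPeriodicPt_forall_omegaSet_eq (a := ⟨C, hC⟩) hσ (fun C => hlip C C.2) hK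
    (fun B B' h => hdisj B.2 B'.2 (Subtype.coe_injective.ne h)) hcl' hCne

theorem Set.Finite.exists_fin_forall_eq_of_image {α β : Type*} {F : α → β} {U : Set α}
    {P : β → Prop} (hU : (F '' U).Finite) (hP : ∀ y ∈ U, P (F y)) :
    ∃ (r : ℕ) (γ : Fin r → β), (∀ k, P (γ k)) ∧ ∀ y ∈ U, ∃ k, F y = γ k := by
  obtain ⟨r, γ, -, hγ⟩ := hU.fin_param
  refine ⟨r, γ, fun k => ?_, fun y hy => ?_⟩
  · obtain ⟨y, hy, hyk⟩ : γ k ∈ F '' U := hγ ▸ mem_range_self k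
    exact hyk ▸ hP y hy
  · obtain ⟨k, hk⟩ : F y ∈ range γ := hγ.symm ▸ mem_image_of_mem F hy
    exact ⟨k, hk.symm⟩

theorem strongly_invariant_collection_asymptotic_periodicity_general
    {X : Type*} [MetricSpace X] [CompactSpace X]
    (f : X → X) (N : ℕ) (A : Fin N → Set X) (φ : Fin N → X → X)
    (lam : NNReal) (hlam : lam < 1)
    (hlip : ∀ i, LipschitzWith lam (φ i))
    (heq : ∀ i, Set.EqOn f (φ i) (A i))
    (𝒞 : Finset (Set X))
    (hCdisj : ∀ C ∈ 𝒞, ∀ C' ∈ 𝒞, C ≠ C' → Disjoint C C')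
    -- strong invariance:
    (hSI : ∃ n₀ : ℕ, 1 ≤ n₀ ∧
      (∀ C ∈ 𝒞, ∃ C' ∈ 𝒞, f '' C ⊆ C') ∧
      (∀ B ∈ 𝒞, ∀ n, n₀ ≤ n → ∃ B' ∈ 𝒞, closure (f^[n] '' B) ⊆ B') ∧
      (∀ C ∈ 𝒞, ∃ i, C ⊆ A i)) :
    ∃ (r : ℕ) (γ : Fin r → Set X),
      (∀ k, IsPeriodicOrbit f (γ k) ∧ γ k ⊆ ⋃ C ∈ 𝒞, C) ∧
      (∀ y ∈ ⋃ C ∈ 𝒞, (C : Set X), ∃ k, omegaSet f y = γ k) := by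
  obtain ⟨n₀, -, hmaps, hcl, hsub⟩ := hSI
  have hlipC (C : Set X) (hC : C ∈ 𝒞) : LipschitzOnWith lam f C := fun a ha b hb => by
    obtain ⟨i, hi⟩ := hsub C hC
    rw [heq i (hi ha), heq i (hi hb)]
    exact hlip i a b
  have hattr (C : Set X) (hC : C ∈ 𝒞) (y : X) (hy : y ∈ C) :=
    𝒞.exists_isPeriodicPt_forall_omegaSet_eq hmaps hlipC hlam hCdisj hcl hC ⟨y, hy⟩
  refine Set.Finite.exists_fin_forall_eq_of_image
    (P := fun γ => IsPeriodicOrbit f γ ∧ γ ⊆ ⋃ C ∈ 𝒞, C) ?_ ?_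
  · rw [image_iUnion₂]
    refine 𝒞.finite_toSet.biUnion fun C hC => Subsingleton.finite ?_
    rintro _ ⟨y, hy, rfl⟩ _ ⟨y', hy', rfl⟩
    obtain ⟨_, _, _, _, _, hω⟩ := hattr C hC y hy
    rw [hω y hy, hω y' hy']
  · intro y hy
    obtain ⟨C, hC, hy⟩ := mem_iUnion₂.1 hy
    obtain ⟨x, n, hn, hx, horbit, hω⟩ := hattr C hC y hy
    exact hω y hy ▸ ⟨⟨x, n, hn, hx, rfl⟩, horbit⟩

/-- if `𝒞` is a strongly invariant finite collection of pairwise disjoint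
open subsets of `X`, then there are finitely many periodic orbits `γ₁,…,γ_r` of `f`
contained in `⋃ 𝒞` such that `ω(f,y)` is one of them for every `y ∈ ⋃ 𝒞`. -/
theorem strongly_invariant_collection_asymptotic_periodicity
    {X : Type*} [MetricSpace X] [CompactSpace X]
    (hball : ∀ (x : X) (r : ℝ), IsPreconnected (Metric.ball x r))
    (f : X → X) (N : ℕ) (A : Fin N → Set X) (φ : Fin N → X → X)
    (lam : NNReal) (hlam0 : 0 < lam) (hlam : lam < 1)
    (hopen : ∀ i, IsOpen (A i))
    (hconn : ∀ i, IsConnected (A i))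
    (hdisj : ∀ i j, i ≠ j → Disjoint (A i) (A j))
    (hdense : Dense (⋃ i, A i))
    (hlip : ∀ i, LipschitzWith lam (φ i))
    (hbilip : ∀ i, ∃ K : NNReal, AntilipschitzWith K (φ i))
    (heq : ∀ i, Set.EqOn f (φ i) (A i))
    (𝒞 : Finset (Set X))
    (hCopen : ∀ C ∈ 𝒞, IsOpen C)
    (hCdisj : ∀ C ∈ 𝒞, ∀ C' ∈ 𝒞, C ≠ C' → Disjoint C C')
    -- strong invariance:
    (hSI : ∃ n₀ : ℕ, 1 ≤ n₀ ∧
      (∀ C ∈ 𝒞, ∃ C' ∈ 𝒞, f '' C ⊆ C') ∧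
      (∀ B ∈ 𝒞, ∀ n, n₀ ≤ n → ∃ B' ∈ 𝒞, closure (f^[n] '' B) ⊆ B') ∧
      (∀ C ∈ 𝒞, ∃ i, C ⊆ A i)) :
    ∃ (r : ℕ) (γ : Fin r → Set X),
      (∀ k, IsPeriodicOrbit f (γ k) ∧ γ k ⊆ ⋃ C ∈ 𝒞, C) ∧
      (∀ y ∈ ⋃ C ∈ 𝒞, (C : Set X), ∃ k, omegaSet f y = γ k) :=
  strongly_invariant_collection_asymptotic_periodicity_general f N A φ lam hlam hlip heq 𝒞 hCdisj
    hSI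
end

section
/- Let f be a piecewise λ-contraction on a compact metric space X whose open balls are connected, with singular set S(f). If Ω(f) ∩ S(f) = ∅, then there exists n ∈ ℕ such that every regular point of order n is a regular point (i.e., Z(f) equals the union of the cylinder sets A^α over itineraries α of order n). -/
lemma lipschitz_compIFS {X : Type*} [MetricSpace X] {N : ℕ} (φ : Fin N → X → X)
    (lam : NNReal) (hlip : ∀ i, LipschitzWith lam (φ i)) (α : ℕ → Fin N) :
    ∀ k, LipschitzWith (lam ^ k) (compIFS φ α k)
  | 0 => by simpa [compIFS] using LipschitzWith.id
  | k + 1 => by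
    have := (hlip (α k)).comp (lipschitz_compIFS φ lam hlip α k)
    simpa [compIFS, pow_succ, mul_comm] using this

lemma iterate_eq_compIFS {X : Type*} {N : ℕ} (f : X → X) (A : Fin N → Set X)
    (φ : Fin N → X → X) (heq : ∀ i, Set.EqOn f (φ i) (A i)) (α : ℕ → Fin N) (x : X) :
    ∀ k, (∀ j < k, f^[j] x ∈ A (α j)) → f^[k] x = compIFS φ α k x
  | 0, _ => rfl
  | k + 1, h => by
    have hk : f^[k] x = compIFS φ α k x :=
      iterate_eq_compIFS f A φ heq α x k (fun j hj => h j (Nat.lt_succ_of_lt hj))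
    have hmem : f^[k] x ∈ A (α k) := h k (Nat.lt_succ_self k)
    calc f^[k + 1] x = f (f^[k] x) := Function.iterate_succ_apply' f k x
      _ = φ (α k) (f^[k] x) := heq (α k) hmem
      _ = compIFS φ α (k + 1) x := by rw [hk]; rfl

/-- if `Ω(f)` is disjoint from the singular set `S(f)`, then there is
`n ≥ 1` such that every regular point of order `n` is a regular point, i.e. `Z(f)`
equals the union of the cylinder sets of order `n`. -/
theorem regular_of_order_n_is_regular
    {X : Type*} [MetricSpace X] [CompactSpace X]
    (hball : ∀ (x : X) (r : ℝ), IsPreconnected (Metric.ball x r))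
    (hdiam : 0 < Metric.diam (Set.univ : Set X))
    (f : X → X) (N : ℕ) (A : Fin N → Set X) (φ : Fin N → X → X)
    (lam : NNReal) (hlam0 : 0 < lam) (hlam : lam < 1)
    (hopen : ∀ i, IsOpen (A i))
    (hconn : ∀ i, IsConnected (A i))
    (hdisj : ∀ i j, i ≠ j → Disjoint (A i) (A j))
    (hdense : Dense (⋃ i, A i))
    (hlip : ∀ i, LipschitzWith lam (φ i))
    (hbilip : ∀ i, ∃ K : NNReal, AntilipschitzWith K (φ i))
    (heq : ∀ i, Set.EqOn f (φ i) (A i))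
    (x₀ : X)
    (hΩS : OmegaIFS f A φ x₀ ∩ (⋃ i, A i)ᶜ = ∅) :
    ∃ n : ℕ, 1 ≤ n ∧
      {x : X | ∀ m : ℕ, f^[m] x ∈ ⋃ i, A i} =
        ⋃ α : ℕ → Fin N, {x : X | ∀ j < n, f^[j] x ∈ A (α j)} := by
  classical
  set U : Set X := ⋃ i, A i with hU
  set C : ℕ → Set X := fun m => closure (⋃ n ∈ Set.Ici m,
    ⋃ α ∈ {α : ℕ → Fin N | ∃ x, ∀ j < n, f^[j] x ∈ A (α j)},
      ({compIFS φ α n x₀} : Set X)) with hC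
  -- Step 1: some C m₀ is disjoint from S = Uᶜ, i.e. C m₀ ⊆ U.
  have hCanti : ∀ m, C (m + 1) ⊆ C m := by
    intro m
    apply closure_mono
    apply Set.biUnion_subset_biUnion_left
    exact Set.Ici_subset_Ici.2 (Nat.le_succ m)
  have hstep1 : ∃ m₀, C m₀ ⊆ U := by
    by_contra h
    push_neg at h
    have hne : ∀ m, (C m ∩ Uᶜ).Nonempty := by
      intro m
      obtain ⟨x, hx, hxU⟩ := Set.not_subset.1 (h m)
      exact ⟨x, hx, hxU⟩
    have hclosed : ∀ m, IsClosed (C m ∩ Uᶜ) := fun m =>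
      isClosed_closure.inter (isOpen_iUnion hopen).isClosed_compl
    have hcomp : IsCompact (C 0 ∩ Uᶜ) := (hclosed 0).isCompact
    have hsub : ∀ m, C (m + 1) ∩ Uᶜ ⊆ C m ∩ Uᶜ := fun m =>
      Set.inter_subset_inter_left _ (hCanti m)
    have := IsCompact.nonempty_iInter_of_sequence_nonempty_isCompact_isClosed
      (fun m => C m ∩ Uᶜ) hsub hne hcomp hclosed
    obtain ⟨x, hx⟩ := this
    have hxΩ : x ∈ OmegaIFS f A φ x₀ ∩ Uᶜ := by
      constructor
      · exact Set.mem_iInter.2 fun m => (Set.mem_iInter.1 hx m).1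
      · exact (Set.mem_iInter.1 hx 0).2
    rw [hΩS] at hxΩ
    exact hxΩ
  obtain ⟨m₀, hm₀⟩ := hstep1
  -- Step 2: thickening of C m₀ inside U.
  have hCcomp : IsCompact (C m₀) := isClosed_closure.isCompact
  obtain ⟨δ, hδpos, hδ⟩ := hCcomp.exists_thickening_subset_open (isOpen_iUnion hopen) hm₀
  -- Step 3: choose n₀ with lam ^ n₀ * diam < δ.
  have hlam1 : (lam : ℝ) < 1 := hlam
  have hlamnn : (0 : ℝ) ≤ lam := lam.coe_nonneg
  have htend : Filter.Tendsto (fun n => (lam : ℝ) ^ n) Filter.atTop (nhds 0) :=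
    tendsto_pow_atTop_nhds_zero_of_lt_one hlamnn hlam1
  have hev : ∀ᶠ n in Filter.atTop, (lam : ℝ) ^ n * Metric.diam (Set.univ : Set X) < δ := by
    have := htend.const_mul (Metric.diam (Set.univ : Set X))
    rw [mul_zero] at this
    filter_upwards [this.eventually (gt_mem_nhds hδpos)] with n hn
    calc (lam : ℝ) ^ n * Metric.diam (Set.univ : Set X)
        = Metric.diam (Set.univ : Set X) * (lam : ℝ) ^ n := mul_comm _ _
      _ < δ := hn
  obtain ⟨n₀, hn₀⟩ := hev.exists_forall_of_atTop
  set n := max (max m₀ n₀) 1 with hn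
  have hn1 : 1 ≤ n := le_max_right _ 1
  have hnm₀ : m₀ ≤ n := le_trans (le_max_left m₀ n₀) (le_max_left _ 1)
  have hnn₀ : n₀ ≤ n := le_trans (le_max_right m₀ n₀) (le_max_left _ 1)
  -- key estimate for any point with an itinerary of order n starting at it
  have hkey : ∀ (z : X) (γ : ℕ → Fin N), (∀ j < n, f^[j] z ∈ A (γ j)) → f^[n] z ∈ U := by
    intro z γ hγ
    have hz : f^[n] z = compIFS φ γ n z := iterate_eq_compIFS f A φ heq γ z n hγ
    have hmemC : compIFS φ γ n x₀ ∈ C m₀ := by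
      apply subset_closure
      refine Set.mem_biUnion hnm₀ ?_
      exact Set.mem_biUnion (show γ ∈ {α : ℕ → Fin N | ∃ x, ∀ j < n, f^[j] x ∈ A (α j)}
        from ⟨z, hγ⟩) rfl
    have hdist : dist (compIFS φ γ n z) (compIFS φ γ n x₀)
        ≤ (lam : ℝ) ^ n * dist z x₀ := by
      have := (lipschitz_compIFS φ lam hlip γ n).dist_le_mul z x₀
      simpa using this
    have hdx : dist z x₀ ≤ Metric.diam (Set.univ : Set X) :=
      Metric.dist_le_diam_of_mem isCompact_univ.isBounded trivial trivial
    have hlt : dist (compIFS φ γ n z) (compIFS φ γ n x₀) < δ := by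
      calc dist (compIFS φ γ n z) (compIFS φ γ n x₀)
          ≤ (lam : ℝ) ^ n * dist z x₀ := hdist
        _ ≤ (lam : ℝ) ^ n₀ * Metric.diam (Set.univ : Set X) := by
            apply mul_le_mul
            · exact pow_le_pow_of_le_one hlamnn hlam1.le hnn₀
            · exact hdx
            · exact dist_nonneg
            · positivity
        _ < δ := hn₀ n₀ le_rfl
    have : compIFS φ γ n z ∈ Metric.thickening δ (C m₀) :=
      Metric.mem_thickening_iff.2 ⟨compIFS φ γ n x₀, hmemC, hlt⟩
    rw [hz]
    exact hδ this
  refine ⟨n, hn1, ?_⟩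
  ext x
  simp only [Set.mem_setOf_eq, Set.mem_iUnion]
  constructor
  · intro hx
    refine ⟨fun j => (Set.mem_iUnion.1 (hx j)).choose, fun j _ => ?_⟩
    exact (Set.mem_iUnion.1 (hx j)).choose_spec
  · rintro ⟨α, hα⟩
    -- extend itineraries step by step
    have hext : ∀ k, ∃ β : ℕ → Fin N, ∀ j < n + k, f^[j] x ∈ A (β j) := by
      intro k
      induction k with
      | zero => exact ⟨α, fun j hj => hα j (by omega)⟩
      | succ k ih =>
        obtain ⟨β, hβ⟩ := ih
        have hnew : f^[n + k] x ∈ U := by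
          rw [Function.iterate_add_apply]
          apply hkey (f^[k] x) (fun j => β (j + k))
          intro j hj
          rw [← Function.iterate_add_apply]
          exact hβ (j + k) (by omega)
        obtain ⟨i, hi⟩ := Set.mem_iUnion.1 hnew
        refine ⟨fun j => if j = n + k then i else β j, fun j hj => ?_⟩
        by_cases hjk : j = n + k
        · subst hjk; simpa using hi
        · have : j < n + k := by omega
          simpa [hjk] using hβ j this
    intro m
    obtain ⟨β, hβ⟩ := hext (m + 1)
    exact Set.mem_iUnion.2 ⟨β m, hβ m (by omega)⟩
end
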